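/- The sequence Γ_n = (∑_{k=1}^n 1/k) − log(n + 1/2) is strictly monotone decreasing in n (for n ≥ 1). -/

import Mathlib

/-!
Γ_n − Γ_{n+1} = log (1 + 1/(n + 1/2)) − 1/(n + 1), and the series
log (1 + 1/a) = ∑ 2/(2k+1) · (2a+1)^{-(2k+1)} has first term 2/(2a+1) = 1/(n + 1) at a = n + 1/2
and all further terms positive.
-/

open Real Finset

lemma two_div_two_mul_add_one_lt_log_one_add_inv {a : ℝ} (ha : 0 < a) :
    2 / (2 * a + 1) < log (1 + a⁻¹) := by
  have hsum := hasSum_log_one_add_inv ha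
  have hfirst_two := sum_le_hasSum (range 2) (fun k _ ↦ by positivity) hsum
  have hsecond : 0 < 2 * (1 / (2 * ((1 : ℕ) : ℝ) + 1)) * (1 / (2 * a + 1)) ^ (2 * 1 + 1) := by
    positivity
  simp only [sum_range_succ, sum_range_zero, Nat.cast_zero] at hfirst_two
  have hfirst : 2 * (1 / (2 * ((0 : ℕ) : ℝ) + 1)) * (1 / (2 * a + 1)) ^ (2 * 0 + 1)
      = 2 / (2 * a + 1) := by
    simp only [Nat.cast_zero]; ring
  linarith

theorem Gamma_seq_strict_anti_general (n : ℕ) :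
    (∑ k ∈ Finset.Icc 1 (n + 1), (1 : ℝ) / k) - Real.log (n + 1 + 1 / 2) <
      (∑ k ∈ Finset.Icc 1 n, (1 : ℝ) / k) - Real.log (n + 1 / 2) := by
  have ha : (0 : ℝ) < n + 1 / 2 := by positivity
  have hkey := two_div_two_mul_add_one_lt_log_one_add_inv ha
  have hlog : log (1 + (n + 1 / 2 : ℝ)⁻¹) = log (n + 1 + 1 / 2) - log (n + 1 / 2) := by
    rw [← log_div (by positivity) ha.ne']
    congr 1
    field_simp
    ring
  have hterm : 2 / (2 * (n + 1 / 2 : ℝ) + 1) = 1 / ((n + 1 : ℕ) : ℝ) := by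
    push_cast
    field_simp
    ring
  rw [sum_Icc_succ_top (by omega)]
  linarith

theorem Gamma_seq_strict_anti (n : ℕ) (hn : 1 ≤ n) :
    (∑ k ∈ Finset.Icc 1 (n + 1), (1 : ℝ) / k) - Real.log (n + 1 + 1 / 2) <
      (∑ k ∈ Finset.Icc 1 n, (1 : ℝ) / k) - Real.log (n + 1 / 2) :=
  Gamma_seq_strict_anti_general n
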